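/- arXiv:math/9711219 — 2 statements merged into one kernel-verified Lean document; each statement's English description precedes it below -/
import Mathlib

section
/- Let D ∈ ℚ[[w, z, ℏ]] be the formal power series D(w,z) = exp((w³+z³)ℏ/24) · ∑_{n≥0} (n!/(2n+1)!) · (½·w·z·(w+z)·ℏ)^n. Then D satisfies the equation (2w·∂_w + 1)((w+z)·D(w,z)) = w·D(w,z) + ¼·(w+z)³·w·ℏ·D(w,z) + D(w,0)·z·D(0,z) + 2w·D(w,0)·D(0,z), where ∂_w denotes the formal partial derivative with respect to w, D(w,0) denotes the series obtained from D by setting z = 0, and D(0,z) denotes the series obtained by setting w = 0. -/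
/-!
Write `D = exp S · φ(u)` with `S = (w³ + z³)ℏ/24`, `u = ½ w z (w + z) ℏ` and
`φ(t) = ∑ n!/(2n+1)! tⁿ`. Setting `z = 0` or `w = 0` kills `u`, so
`D(w,0) D(0,z) = exp(w³ℏ/24) exp(z³ℏ/24) = exp S`. Since `∂_w exp S = (w²ℏ/8) exp S` and
`w (w + z) ∂_w u = (2w + z) u`, the equation divided by `exp S` becomes
`(2w + z) (2u φ'(u) + φ(u)) = (2w + z) (1 + u φ(u)/2)`, an instance of the ODE
`2t φ' + φ = 1 + t φ/2`, which is the recurrence `(2n + 3) aₙ₊₁ = aₙ/2` for `aₙ = n!/(2n+1)!`.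
All the infinite sums converge `ℏ`-adically: their `n`-th terms are divisible by `ℏⁿ`.
-/

noncomputable section

/-- The ring `ℚ[[w, z, ℏ]]` of formal power series in three variables. -/
abbrev R3 : Type := MvPowerSeries (Fin 3) ℚ

/-- The variable `w`. -/
def W : R3 := MvPowerSeries.X 0
/-- The variable `z`. -/
def Z : R3 := MvPowerSeries.X 1
/-- The variable `ℏ`. -/
def H : R3 := MvPowerSeries.X 2

/-- Total degree of a monomial. -/
def deg (m : Fin 3 →₀ ℕ) : ℕ := m 0 + m 1 + m 2

/-- The formal exponential `exp S = ∑_{n≥0} Sⁿ/n!` of a power series `S`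
(intended for `S` with zero constant term, in which case the coefficient of any
monomial `m` only receives contributions from `n ≤ deg m`). -/
def mvExp (S : R3) : R3 := fun m =>
  ∑ n ∈ Finset.range (deg m + 1), (n.factorial : ℚ)⁻¹ * MvPowerSeries.coeff (R := ℚ) m (S ^ n)

/-- The sum `∑_{n≥0} f n` of a family of power series (intended when the coefficient of
any monomial `m` in `f n` vanishes for `n > deg m`, e.g. when `f n` is divisible by `ℏⁿ`). -/
def seriesSum (f : ℕ → R3) : R3 := fun m =>
  ∑ n ∈ Finset.range (deg m + 1), MvPowerSeries.coeff (R := ℚ) m (f n)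

/-- The formal partial derivative `∂_w`, sending `wⁱ zʲ ℏᵏ` to `i·wⁱ⁻¹ zʲ ℏᵏ`. -/
def dW (f : R3) : R3 := fun m =>
  ((m 0 : ℚ) + 1) * MvPowerSeries.coeff (R := ℚ) (m + Finsupp.single 0 1) f

/-- Setting `z = 0`: keep only the monomials not involving `z`. -/
def setZ0 (f : R3) : R3 := fun m => if m 1 = 0 then MvPowerSeries.coeff (R := ℚ) m f else 0

/-- Setting `w = 0`: keep only the monomials not involving `w`. -/
def setW0 (f : R3) : R3 := fun m => if m 0 = 0 then MvPowerSeries.coeff (R := ℚ) m f else 0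

/-- Substituting `-z` for `z`: the coefficient of `wⁱ zʲ ℏᵏ` picks up a sign `(-1)ʲ`. -/
def negZ (f : R3) : R3 := fun m => (-1 : ℚ) ^ (m 1) * MvPowerSeries.coeff (R := ℚ) m f

/-- The automorphism swapping `w` and `z`, on the level of coefficients. -/
def swapWZ (f : R3) : R3 := fun m =>
  MvPowerSeries.coeff (R := ℚ) (Finsupp.equivMapDomain (Equiv.swap (0 : Fin 3) 1) m) f

/-- Dijkgraaf's two-point function
`D(w,z) = exp((w³+z³)ℏ/24) · ∑_{n≥0} (n!/(2n+1)!) (½ w z (w+z) ℏ)ⁿ`. -/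
def Dser : R3 :=
  mvExp (MvPowerSeries.C (σ := Fin 3) (R := ℚ) (1 / 24) * (W ^ 3 + Z ^ 3) * H) *
    seriesSum fun n =>
      MvPowerSeries.C (σ := Fin 3) (R := ℚ) ((n.factorial : ℚ) / ((2 * n + 1).factorial : ℚ)) *
        (MvPowerSeries.C (σ := Fin 3) (R := ℚ) (1 / 2) * W * Z * (W + Z) * H) ^ n

open MvPowerSeries Finset

section SetVarZero

variable {σ R : Type*} [CommSemiring R]

def setVarZero (i : σ) : MvPowerSeries σ R →+* MvPowerSeries σ R where
  toFun f := fun m => if m i = 0 then coeff m f else 0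
  map_one' := by
    classical
    ext m
    change (if m i = 0 then coeff m (1 : MvPowerSeries σ R) else 0) = coeff m 1
    rw [coeff_one]
    split_ifs <;> simp_all
  map_mul' f g := by
    classical
    ext m
    refine Eq.trans ?_ (coeff_mul m _ _).symm
    change (if m i = 0 then coeff m (f * g) else 0) = ∑ p ∈ antidiagonal m,
      (if p.1 i = 0 then coeff p.1 f else 0) * (if p.2 i = 0 then coeff p.2 g else 0)
    rw [coeff_mul, ite_sum_zero]
    refine sum_congr rfl fun p hp => ?_
    have hi : p.1 i + p.2 i = m i := by rw [← mem_antidiagonal.1 hp, Finsupp.add_apply]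
    simp only [ite_zero_mul_ite_zero, ← Nat.add_eq_zero_iff, hi]
  map_zero' := by
    ext m
    exact ite_self _
  map_add' f g := by
    ext m
    change (if m i = 0 then coeff m (f + g) else 0) =
      (if m i = 0 then coeff m f else 0) + (if m i = 0 then coeff m g else 0)
    split_ifs <;> simp

theorem coeff_setVarZero (i : σ) (f : MvPowerSeries σ R) (m : σ →₀ ℕ) :
    coeff m (setVarZero i f) = if m i = 0 then coeff m f else 0 := rfl

theorem setVarZero_C (i : σ) (r : R) : setVarZero i (C r) = C r := by
  classical
  ext m
  rw [coeff_setVarZero, coeff_C]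
  split_ifs <;> simp_all

theorem setVarZero_X_self (i : σ) : setVarZero i (X i : MvPowerSeries σ R) = 0 := by
  classical
  ext m
  rw [coeff_setVarZero, coeff_X, coeff_zero]
  split_ifs <;> simp_all

theorem setVarZero_X_of_ne {i j : σ} (h : j ≠ i) :
    setVarZero i (X j : MvPowerSeries σ R) = X j := by
  classical
  ext m
  rw [coeff_setVarZero, coeff_X]
  split_ifs <;> simp_all

end SetVarZero

theorem coeff_seriesSum (f : ℕ → R3) (m : Fin 3 →₀ ℕ) :
    coeff m (seriesSum f) = ∑ n ∈ range (deg m + 1), coeff m (f n) := rfl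

theorem coeff_seriesSum_of_lt {f : ℕ → R3} (hf : ∀ n, H ^ n ∣ f n) {m : Fin 3 →₀ ℕ} {N : ℕ}
    (hN : m 2 < N) : coeff m (seriesSum f) = ∑ n ∈ range N, coeff m (f n) := by
  have truncate : ∀ M, m 2 < M →
      ∑ n ∈ range M, coeff m (f n) = ∑ n ∈ range (m 2 + 1), coeff m (f n) := fun M hM =>
    (sum_subset (range_subset_range.2 hM) fun n _ hn =>
      X_pow_dvd_iff.1 (hf n) m (by simpa using hn)).symm
  rw [coeff_seriesSum, truncate _ (by simp only [deg]; omega), truncate N hN]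

theorem mul_seriesSum (g : R3) {f : ℕ → R3} (hf : ∀ n, H ^ n ∣ f n) :
    g * seriesSum f = seriesSum fun n => g * f n := by
  ext m
  rw [coeff_mul, coeff_seriesSum_of_lt (fun n => (hf n).mul_left g) (Nat.lt_succ_self (m 2))]
  simp_rw [coeff_mul]
  rw [sum_comm]
  refine sum_congr rfl fun p hp => ?_
  rw [coeff_seriesSum_of_lt hf (N := m 2 + 1), mul_sum]
  exact Nat.lt_succ_of_le (HasAntidiagonal.antidiagonal.snd_le hp 2)

theorem seriesSum_eq_add_seriesSum_succ {f : ℕ → R3} (hf : ∀ n, H ^ n ∣ f n) :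
    seriesSum f = f 0 + seriesSum fun n => f (n + 1) := by
  ext m
  rw [map_add, coeff_seriesSum_of_lt hf (N := m 2 + 2) (by omega),
    coeff_seriesSum_of_lt (fun n => (pow_dvd_pow H n.le_succ).trans (hf (n + 1)))
      (Nat.lt_succ_self (m 2)), sum_range_succ', add_comm]

theorem seriesSum_mul {f g : ℕ → R3} (hf : ∀ n, H ^ n ∣ f n) (hg : ∀ n, H ^ n ∣ g n) :
    seriesSum f * seriesSum g =
      seriesSum fun n => ∑ k ∈ range (n + 1), f k * g (n - k) := by
  have hfg : ∀ k l, H ^ (k + l) ∣ f k * g l := fun k l =>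
    pow_add H k l ▸ mul_dvd_mul (hf k) (hg l)
  ext m
  set N := m 2 + 1
  have hN : ∀ p ∈ antidiagonal m, p.1 2 < N ∧ p.2 2 < N := fun p hp =>
    ⟨Nat.lt_succ_of_le (HasAntidiagonal.antidiagonal.fst_le hp 2),
      Nat.lt_succ_of_le (HasAntidiagonal.antidiagonal.snd_le hp 2)⟩
  have square : coeff m (seriesSum f * seriesSum g) =
      ∑ k ∈ range N, ∑ l ∈ range N, coeff m (f k * g l) := by
    rw [coeff_mul]
    calc _ = ∑ p ∈ antidiagonal m, ∑ k ∈ range N, ∑ l ∈ range N,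
          coeff p.1 (f k) * coeff p.2 (g l) := sum_congr rfl fun p hp => by
            rw [coeff_seriesSum_of_lt hf (hN p hp).1, coeff_seriesSum_of_lt hg (hN p hp).2,
              sum_mul_sum]
      _ = _ := by
        rw [sum_comm]
        refine sum_congr rfl fun k _ => ?_
        simp_rw [sum_comm (s := antidiagonal m), coeff_mul]
  have hcauchy : ∀ n, H ^ n ∣ ∑ k ∈ range (n + 1), f k * g (n - k) := fun n =>
    dvd_sum fun k hk => by
      simpa [Nat.add_sub_cancel' (mem_range_succ_iff.1 hk)] using hfg k (n - k)
  rw [square, coeff_seriesSum_of_lt hcauchy (N := N) (Nat.lt_succ_self _)]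
  simp_rw [map_sum]
  rw [sum_range_diag_flip N fun k l => coeff m (f k * g l)]
  refine sum_congr rfl fun k hk => ?_
  refine (sum_subset (range_subset_range.2 (Nat.sub_le N k)) fun l _ hl => ?_).symm
  exact X_pow_dvd_iff.1 (hfg k l) m (by rw [mem_range] at hl; omega)

theorem pow_H_dvd_pderiv {i : Fin 3} (hi : i ≠ 2) {n : ℕ} {f : R3} (h : H ^ n ∣ f) :
    H ^ n ∣ pderiv ℚ i f := by
  obtain ⟨g, rfl⟩ := h
  rw [Derivation.leibniz, Derivation.leibniz_pow, H, pderiv_X_of_ne hi.symm]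
  simp

theorem pderiv_seriesSum {i : Fin 3} (hi : i ≠ 2) {f : ℕ → R3} (hf : ∀ n, H ^ n ∣ f n) :
    pderiv ℚ i (seriesSum f) = seriesSum fun n => pderiv ℚ i (f n) := by
  ext m
  rw [coeff_pderiv, coeff_seriesSum_of_lt hf (N := m 2 + 1),
    coeff_seriesSum_of_lt (fun n => pow_H_dvd_pderiv hi (hf n)) (Nat.lt_succ_self _), sum_mul]
  · simp only [coeff_pderiv]
  · simp [hi.symm]

theorem setVarZero_seriesSum (i : Fin 3) (f : ℕ → R3) :
    setVarZero i (seriesSum f) = seriesSum fun n => setVarZero i (f n) := by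
  ext m
  simp only [coeff_setVarZero, coeff_seriesSum, ite_sum_zero]

/-- `p(U) = ∑ pₙ Uⁿ`. As `seriesSum` truncates at the total degree, this is the true sum only
when `H ∣ U`. -/
def evalSeries (U : R3) : PowerSeries ℚ →ₗ[ℚ] R3 where
  toFun p := seriesSum fun n => C (PowerSeries.coeff n p) * U ^ n
  map_add' p q := by
    ext m
    simp only [coeff_seriesSum, map_add, add_mul, sum_add_distrib]
  map_smul' c p := by
    ext m
    simp only [coeff_seriesSum, map_smul, smul_eq_mul, coeff_C_mul, mul_sum,
      RingHom.id_apply, mul_assoc]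

theorem evalSeries_apply (U : R3) (p : PowerSeries ℚ) :
    evalSeries U p = seriesSum fun n => C (PowerSeries.coeff n p) * U ^ n := rfl

theorem pow_H_dvd_evalSeries_term {U : R3} (hU : H ∣ U) (p : PowerSeries ℚ) (n : ℕ) :
    H ^ n ∣ C (PowerSeries.coeff n p) * U ^ n :=
  (pow_dvd_pow_of_dvd hU n).mul_left _

theorem evalSeries_X_mul {U : R3} (hU : H ∣ U) (p : PowerSeries ℚ) :
    evalSeries U (PowerSeries.X * p) = U * evalSeries U p := by
  rw [evalSeries_apply, seriesSum_eq_add_seriesSum_succ (pow_H_dvd_evalSeries_term hU _),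
    evalSeries_apply, mul_seriesSum U (pow_H_dvd_evalSeries_term hU p)]
  simp only [PowerSeries.coeff_zero_X_mul, PowerSeries.coeff_succ_X_mul, map_zero, zero_mul,
    zero_add, pow_succ]
  congr 1
  funext n
  ring

theorem evalSeries_C (U : R3) (c : ℚ) : evalSeries U (PowerSeries.C c) = C c := by
  ext m
  simp [evalSeries_apply, coeff_seriesSum, PowerSeries.coeff_C, coeff_C, coeff_one]

theorem evalSeries_one (U : R3) : evalSeries U 1 = 1 := by
  simpa using evalSeries_C U 1

theorem evalSeries_zero_eq_C (p : PowerSeries ℚ) :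
    evalSeries 0 p = C (PowerSeries.constantCoeff p) := by
  conv_lhs => rw [PowerSeries.eq_X_mul_shift_add_const p]
  rw [map_add, evalSeries_X_mul (dvd_zero H), zero_mul, zero_add, evalSeries_C]

theorem pderiv_evalSeries {i : Fin 3} (hi : i ≠ 2) {U : R3} (hU : H ∣ U) (p : PowerSeries ℚ) :
    pderiv ℚ i (evalSeries U p) =
      pderiv ℚ i U * evalSeries U (PowerSeries.derivative ℚ p) := by
  rw [evalSeries_apply, pderiv_seriesSum hi (pow_H_dvd_evalSeries_term hU p),
    seriesSum_eq_add_seriesSum_succ fun n =>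
      pow_H_dvd_pderiv hi (pow_H_dvd_evalSeries_term hU p n),
    evalSeries_apply, mul_seriesSum _ (pow_H_dvd_evalSeries_term hU _)]
  simp only [pow_zero, mul_one, pderiv_C, Derivation.leibniz, Derivation.leibniz_pow,
    add_tsub_cancel_right, smul_eq_mul, nsmul_eq_mul, Nat.cast_add, Nat.cast_one, mul_zero,
    add_zero, zero_add, PowerSeries.coeff_derivative, map_mul, map_add, map_natCast, map_one]
  congr 1
  funext n
  ring

theorem setVarZero_evalSeries (i : Fin 3) (U : R3) (p : PowerSeries ℚ) :
    setVarZero i (evalSeries U p) = evalSeries (setVarZero i U) p := by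
  simp only [evalSeries_apply, setVarZero_seriesSum, map_mul, map_pow, setVarZero_C]

theorem mvExp_eq_evalSeries (S : R3) : mvExp S = evalSeries S (PowerSeries.exp ℚ) := by
  ext m
  simp only [evalSeries_apply, coeff_seriesSum, coeff_C_mul, PowerSeries.coeff_exp,
    Algebra.algebraMap_self, RingHom.id_apply, one_div]
  rfl

theorem pderiv_mvExp {i : Fin 3} (hi : i ≠ 2) {S : R3} (hS : H ∣ S) :
    pderiv ℚ i (mvExp S) = pderiv ℚ i S * mvExp S := by
  rw [mvExp_eq_evalSeries, pderiv_evalSeries hi hS, PowerSeries.derivative_exp]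

theorem setVarZero_mvExp (i : Fin 3) (S : R3) :
    setVarZero i (mvExp S) = mvExp (setVarZero i S) := by
  rw [mvExp_eq_evalSeries, mvExp_eq_evalSeries, setVarZero_evalSeries]

theorem mvExp_add {A B : R3} (hA : H ∣ A) (hB : H ∣ B) : mvExp (A + B) = mvExp A * mvExp B := by
  simp only [mvExp_eq_evalSeries, evalSeries_apply]
  rw [seriesSum_mul (pow_H_dvd_evalSeries_term hA _) (pow_H_dvd_evalSeries_term hB _)]
  congr 1
  funext n
  rw [add_pow, mul_sum]
  refine sum_congr rfl fun k hk => ?_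
  have hkn := mem_range_succ_iff.1 hk
  have hfac : 1 / (n.factorial : ℚ) * n.choose k =
      1 / k.factorial * (1 / (n - k).factorial) := by
    have h := Nat.choose_mul_factorial_mul_factorial hkn
    field_simp
    exact_mod_cast h
  simp only [PowerSeries.coeff_exp, Algebra.algebraMap_self, RingHom.id_apply]
  calc _ = C (1 / (n.factorial : ℚ) * n.choose k) * (A ^ k * B ^ (n - k)) := by
        rw [map_mul, map_natCast]; ring
    _ = _ := by rw [hfac, map_mul]; ring

def dijkgraafSeries : PowerSeries ℚ :=
  PowerSeries.mk fun n => (n.factorial : ℚ) / (2 * n + 1).factorial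

theorem constantCoeff_dijkgraafSeries : PowerSeries.constantCoeff dijkgraafSeries = 1 := by
  simp [dijkgraafSeries, ← PowerSeries.coeff_zero_eq_constantCoeff_apply]

theorem dijkgraafSeries_ode :
    (2 : ℚ) • (PowerSeries.X * PowerSeries.derivative ℚ dijkgraafSeries) + dijkgraafSeries =
      1 + (1 / 2 : ℚ) • (PowerSeries.X * dijkgraafSeries) := by
  ext (_ | n)
  · simp [dijkgraafSeries]
  · have hfac : ((2 * (n + 1) + 1).factorial : ℚ) =
        (2 * n + 3) * (2 * n + 2) * (2 * n + 1).factorial := by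
      rw [show 2 * (n + 1) + 1 = 2 * n + 1 + 1 + 1 by ring, Nat.factorial_succ, Nat.factorial_succ]
      push_cast
      ring
    simp only [dijkgraafSeries, map_add, map_smul, smul_eq_mul, PowerSeries.coeff_succ_X_mul,
      PowerSeries.coeff_derivative, PowerSeries.coeff_mk, PowerSeries.coeff_one,
      if_neg n.succ_ne_zero, hfac, Nat.factorial_succ n]
    push_cast
    field_simp
    ring

theorem Dser_eq_mvExp_mul_evalSeries : Dser = mvExp (C (1 / 24) * (W ^ 3 + Z ^ 3) * H) *
    evalSeries (C (1 / 2) * W * Z * (W + Z) * H) dijkgraafSeries := by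
  simp only [Dser, evalSeries_apply, dijkgraafSeries, PowerSeries.coeff_mk]

theorem setZ0_eq_setVarZero (f : R3) : setZ0 f = setVarZero 1 f := rfl

theorem setW0_eq_setVarZero (f : R3) : setW0 f = setVarZero 0 f := rfl

theorem setZ0_Dser_mul_setW0_Dser :
    setZ0 Dser * setW0 Dser = mvExp (C (1 / 24) * (W ^ 3 + Z ^ 3) * H) := by
  rw [setZ0_eq_setVarZero, setW0_eq_setVarZero, Dser_eq_mvExp_mul_evalSeries]
  simp only [W, Z, H, map_mul, map_add, map_pow, setVarZero_mvExp, setVarZero_evalSeries,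
    setVarZero_C, setVarZero_X_self, setVarZero_X_of_ne, ne_eq, Fin.reduceEq, not_false_eq_true,
    zero_pow three_ne_zero, mul_zero, zero_mul, add_zero, zero_add, evalSeries_zero_eq_C,
    constantCoeff_dijkgraafSeries, map_one, mul_one]
  change mvExp (C (1 / 24) * W ^ 3 * H) * mvExp (C (1 / 24) * Z ^ 3 * H) =
    mvExp (C (1 / 24) * (W ^ 3 + Z ^ 3) * H)
  rw [← mvExp_add (dvd_mul_left H _) (dvd_mul_left H _)]
  congr 1
  ring

theorem dW_eq_pderiv (f : R3) : dW f = pderiv ℚ 0 f := by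
  ext m
  rw [coeff_pderiv, mul_comm]
  rfl

theorem pderiv_W : pderiv ℚ 0 W = 1 := pderiv_X_self

theorem pderiv_Z : pderiv ℚ 0 Z = 0 := pderiv_X_of_ne (by decide)

theorem pderiv_H : pderiv ℚ 0 H = 0 := pderiv_X_of_ne (by decide)

theorem mul_pderiv_evalSeries_dijkgraafSeries :
    2 * W * (W + Z) * pderiv ℚ 0 (evalSeries (C (1 / 2) * W * Z * (W + Z) * H) dijkgraafSeries) =
      (2 * W + Z) * (1 + C (1 / 2) * (C (1 / 2) * W * Z * (W + Z) * H) *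
        evalSeries (C (1 / 2) * W * Z * (W + Z) * H) dijkgraafSeries -
        evalSeries (C (1 / 2) * W * Z * (W + Z) * H) dijkgraafSeries) := by
  set u : R3 := C (1 / 2) * W * Z * (W + Z) * H
  have hu : H ∣ u := dvd_mul_left H _
  have hdu : W * (W + Z) * pderiv ℚ 0 u = (2 * W + Z) * u := by
    simp only [u, Derivation.leibniz, map_add, pderiv_W, pderiv_Z, pderiv_H, pderiv_C, smul_eq_mul]
    ring
  have hode := congrArg (evalSeries u) dijkgraafSeries_ode
  rw [map_add, map_add, map_smul, map_smul, evalSeries_X_mul hu, evalSeries_X_mul hu,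
    evalSeries_one, smul_eq_C_mul, smul_eq_C_mul, map_ofNat] at hode
  rw [pderiv_evalSeries (by decide) hu]
  linear_combination
    2 * evalSeries u (PowerSeries.derivative ℚ dijkgraafSeries) * hdu + (2 * W + Z) * hode

/-- Dijkgraaf's formula (6): the series `D(w,z)` satisfies the translation of
Witten's KdV equation,
`(2w ∂_w + 1)((w+z) D) = w D + ¼ (w+z)³ w ℏ D + D(w,0) z D(0,z) + 2w D(w,0) D(0,z)`. -/
theorem Dser_satisfies_KdV :
    2 * W * dW ((W + Z) * Dser) + (W + Z) * Dser =
      W * Dser + MvPowerSeries.C (σ := Fin 3) (R := ℚ) (1 / 4) * (W + Z) ^ 3 * W * H * Dser +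
        setZ0 Dser * Z * setW0 Dser + 2 * W * setZ0 Dser * setW0 Dser := by
  have hdS : pderiv ℚ 0 (C (1 / 24) * (W ^ 3 + Z ^ 3) * H) = 3 * C (1 / 24) * W ^ 2 * H := by
    simp only [Derivation.leibniz, Derivation.leibniz_pow, map_add, pderiv_W, pderiv_Z, pderiv_H,
      pderiv_C, smul_eq_mul, nsmul_eq_mul]
    ring
  have hE := pderiv_mvExp (by decide : (0 : Fin 3) ≠ 2)
    (dvd_mul_left H (C (1 / 24) * (W ^ 3 + Z ^ 3)))
  have hF := mul_pderiv_evalSeries_dijkgraafSeries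
  have hprod := setZ0_Dser_mul_setW0_Dser
  have hC2 : (C (1 / 2) : R3) ^ 2 = C (1 / 4) := by rw [← map_pow]; norm_num
  have hC24 : 6 * (C (1 / 24) : R3) = C (1 / 4) := by rw [← map_ofNat C 6, ← map_mul]; norm_num
  rw [dW_eq_pderiv, Dser_eq_mvExp_mul_evalSeries] at *
  set E := mvExp (C (1 / 24) * (W ^ 3 + Z ^ 3) * H)
  set F := evalSeries (C (1 / 2) * W * Z * (W + Z) * H) dijkgraafSeries
  simp only [Derivation.leibniz, map_add, pderiv_W, pderiv_Z, smul_eq_mul, hE, hdS]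
  linear_combination E * hF - (Z + 2 * W) * hprod +
    W * H * E * F * (Z * (Z + W) * (Z + 2 * W) * hC2 + W ^ 2 * (W + Z) * hC24)
end
end

section
/- Let G ∈ ℚ[[w, z, ℏ]] be the formal power series G(w,z) = exp(z³ℏ/24) · ∑_{n≥0} (n!/(2n+1)!) · (½·w·z·(w+z)·ℏ)^n. Then for all nonnegative integers a, m, g with m < g, the coefficient of w^a z^m ℏ^g in G is zero. -/
noncomputable section

/-- The series `G = exp(z³ℏ/24) · ∑_{n≥0} (n!/(2n+1)!) (½ w z (w+z) ℏ)ⁿ`. -/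
def Gser : R3 :=
  mvExp (MvPowerSeries.C (σ := Fin 3) (R := ℚ) (1 / 24) * Z ^ 3 * H) *
    seriesSum fun n =>
      MvPowerSeries.C (σ := Fin 3) (R := ℚ) ((n.factorial : ℚ) / ((2 * n + 1).factorial : ℚ)) *
        (MvPowerSeries.C (σ := Fin 3) (R := ℚ) (1 / 2) * W * Z * (W + Z) * H) ^ n

/-! Every monomial of `G` has `z`-exponent at least its `ℏ`-exponent: `ℏ` only enters through
`z³ℏ` and `wz(w+z)ℏ`, each of which carries a `z` along with its `ℏ`, and the series with this
property form a subalgebra that is closed under the formal exponential and under the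
`ℏ`-adically convergent sums used to build `G`. -/

namespace MvPowerSeries

variable {σ R : Type*} [CommSemiring R]

def exponentLeSubalgebra (j i : σ) : Subalgebra R (MvPowerSeries σ R) where
  carrier := {f | ∀ μ : σ →₀ ℕ, μ i < μ j → coeff μ f = 0}
  mul_mem' {f g} hf hg μ hμ := by
    classical
    rw [coeff_mul]
    refine Finset.sum_eq_zero fun p hp => ?_
    rw [Finset.HasAntidiagonal.mem_antidiagonal] at hp
    have hi : p.1 i + p.2 i = μ i := by rw [← hp, Finsupp.add_apply]
    have hj : p.1 j + p.2 j = μ j := by rw [← hp, Finsupp.add_apply]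
    by_cases h₁ : p.1 i < p.1 j
    · rw [hf _ h₁, zero_mul]
    · rw [hg _ (by omega), mul_zero]
  add_mem' {f g} hf hg μ hμ := by
    rw [map_add, hf μ hμ, hg μ hμ, add_zero]
  algebraMap_mem' r μ hμ := by
    classical
    have : μ ≠ 0 := by rintro rfl; simp at hμ
    rw [algebraMap_apply, coeff_C, if_neg this]

variable {j i : σ}

theorem monomial_mem_exponentLeSubalgebra {ν : σ →₀ ℕ} (hν : ν j ≤ ν i) (c : R) :
    monomial ν c ∈ exponentLeSubalgebra j i := by
  classical
  intro μ hμ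
  rw [coeff_monomial, if_neg]
  rintro rfl
  omega

theorem X_mem_exponentLeSubalgebra {k : σ} (hk : k ≠ j) :
    (X k : MvPowerSeries σ R) ∈ exponentLeSubalgebra j i :=
  monomial_mem_exponentLeSubalgebra (by simp [hk]) 1

theorem X_mul_X_mem_exponentLeSubalgebra :
    (X i * X j : MvPowerSeries σ R) ∈ exponentLeSubalgebra j i := by
  rw [X_def, X_def, monomial_mul_monomial]
  refine monomial_mem_exponentLeSubalgebra ?_ _
  by_cases h : i = j <;> simp [h]

end MvPowerSeries

open MvPowerSeries

theorem mvExp_mem_exponentLeSubalgebra {j i : Fin 3} {S : R3}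
    (hS : S ∈ exponentLeSubalgebra j i) : mvExp S ∈ exponentLeSubalgebra j i := by
  intro μ hμ
  rw [coeff_apply, mvExp]
  exact Finset.sum_eq_zero fun n _ => by rw [pow_mem hS n μ hμ, mul_zero]

theorem seriesSum_mem_exponentLeSubalgebra {j i : Fin 3} {f : ℕ → R3}
    (hf : ∀ n, f n ∈ exponentLeSubalgebra j i) : seriesSum f ∈ exponentLeSubalgebra j i := by
  intro μ hμ
  rw [coeff_apply, seriesSum]
  exact Finset.sum_eq_zero fun n _ => hf n μ hμ

theorem Gser_mem_exponentLeSubalgebra : Gser ∈ exponentLeSubalgebra (R := ℚ) 2 1 := by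
  have hC (c : ℚ) : C c ∈ exponentLeSubalgebra (σ := Fin 3) 2 1 := by
    rw [← monomial_zero_eq_C_apply]
    exact monomial_mem_exponentLeSubalgebra (by simp) c
  have hW : W ∈ exponentLeSubalgebra 2 1 := X_mem_exponentLeSubalgebra (by decide)
  have hZ : Z ∈ exponentLeSubalgebra 2 1 := X_mem_exponentLeSubalgebra (by decide)
  have hZH : Z * H ∈ exponentLeSubalgebra 2 1 := X_mul_X_mem_exponentLeSubalgebra
  have hcubic : C (1 / 24) * Z ^ 3 * H = C (1 / 24) * Z ^ 2 * (Z * H) := by ring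
  have hcross : C (1 / 2) * W * Z * (W + Z) * H = C (1 / 2) * W * (W + Z) * (Z * H) := by ring
  refine mul_mem (mvExp_mem_exponentLeSubalgebra ?_)
    (seriesSum_mem_exponentLeSubalgebra fun n => mul_mem (hC _) (pow_mem ?_ n))
  · rw [hcubic]
    exact mul_mem (mul_mem (hC _) (pow_mem hZ 2)) hZH
  · rw [hcross]
    exact mul_mem (mul_mem (mul_mem (hC _) hW) (add_mem hW hZ)) hZH

/-- In the `ℏ^g` part of `G`, only powers of `z` with exponent at least `g` occur:
the coefficient of `w^a z^m ℏ^g` vanishes whenever `m < g`. -/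
theorem Gser_coeff_vanish (a m g : ℕ) (hmg : m < g) :
    MvPowerSeries.coeff (R := ℚ)
      (Finsupp.single 0 a + Finsupp.single 1 m + Finsupp.single 2 g) Gser = 0 :=
  Gser_mem_exponentLeSubalgebra _ (by simpa [Finsupp.single_apply] using hmg)

end
end
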